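/- Let k be a non-negative integer, let t > 0, and let f : ℝ → ℝ be (2k+2)-times continuously differentiable with bounded (2k+2)-th derivative. Then there exist real numbers b_1, …, b_{k+1} such that lim_{n→∞} n^{k+1} [ ∫ f(x) dΓ(n, n/t)(x) − f(t) − Σ_{m=1}^{k} b_m n^{−m} ] = b_{k+1}. -/

import Mathlib

/-!
Taylor-expand `f` at `t` to order `2k+2`. For `X ~ Γ(a, r)` the Stein identity
`E[(rX - a) g(X)] = E[X g'(X)]` (for polynomials `g`) gives the recursion
`μ_{j+2} = (j+1)/r (μ_{j+1} + (a/r) μ_j)` for the central moments `μ_j = E[(X - a/r)^j]`.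
With `a = n`, `r = n/t`, each `μ_j` is therefore a polynomial in `1/n` divisible by
`(1/n)^⌈j/2⌉`, so the expectation of the Taylor polynomial is a polynomial in `1/n`, whose
coefficients are the `b_m`. The Taylor remainder is at most `ε |x-t|^(2k+2) + K_ε |x-t|^(2k+4)`,
and the expectation of that is `ε O(n^-(k+1)) + K_ε O(n^-(k+2))`, i.e. `o(n^-(k+1))`.
-/

open MeasureTheory ProbabilityTheory Filter Set Polynomial Real
open scoped Nat Topology

section GammaMeasure

lemma support_gammaPDFReal_subset (a r : ℝ) : (gammaPDFReal a r).support ⊆ Ici 0 :=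
  fun _ hx => mem_Ici.mpr <| not_lt.mp fun h => hx (by simp [gammaPDFReal, not_le.mpr h])

variable {a r : ℝ}

lemma toReal_gammaPDF (ha : 0 < a) (hr : 0 < r) (x : ℝ) :
    (gammaPDF a r x).toReal = gammaPDFReal a r x :=
  ENNReal.toReal_ofReal (gammaPDFReal_nonneg ha hr x)

lemma integral_gammaMeasure (ha : 0 < a) (hr : 0 < r) (g : ℝ → ℝ) :
    ∫ x, g x ∂gammaMeasure a r = ∫ x in Ioi 0, gammaPDFReal a r x * g x := by
  rw [gammaMeasure, integral_withDensity_eq_integral_toReal_smul (f := gammaPDF a r)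
    (measurable_gammaPDFReal a r).ennreal_ofReal (ae_of_all _ fun _ => ENNReal.ofReal_lt_top),
    ← integral_Ici_eq_integral_Ioi, setIntegral_eq_integral_of_forall_compl_eq_zero
      fun x hx => by
        rw [Function.notMem_support.mp fun h => hx (support_gammaPDFReal_subset a r h), zero_mul]]
  simp only [toReal_gammaPDF ha hr, smul_eq_mul]

lemma integrable_gammaMeasure_iff (ha : 0 < a) (hr : 0 < r) (g : ℝ → ℝ) :
    Integrable g (gammaMeasure a r) ↔
      IntegrableOn (fun x => gammaPDFReal a r x * g x) (Ioi 0) := by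
  rw [gammaMeasure, integrable_withDensity_iff_integrable_smul' (f := gammaPDF a r)
    (measurable_gammaPDFReal a r).ennreal_ofReal (ae_of_all _ fun _ => ENNReal.ofReal_lt_top),
    ← integrableOn_Ici_iff_integrableOn_Ioi, integrableOn_iff_integrable_of_support_subset
      ((Function.support_mul_subset_left _ _).trans (support_gammaPDFReal_subset a r))]
  simp only [toReal_gammaPDF ha hr, smul_eq_mul]

lemma gammaPDFReal_mul_pow {x : ℝ} (hx : 0 < x) (p : ℕ) :
    gammaPDFReal a r x * x ^ p = r ^ a / Gamma a * (x ^ (a + p - 1) * exp (-(r * x))) := by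
  rw [gammaPDFReal, if_pos hx.le, add_sub_right_comm, rpow_add hx, rpow_natCast]
  ring

lemma integrable_pow_gammaMeasure (ha : 0 < a) (hr : 0 < r) (p : ℕ) :
    Integrable (fun x => x ^ p) (gammaMeasure a r) := by
  rw [integrable_gammaMeasure_iff ha hr]
  have h := integrableOn_rpow_mul_exp_neg_mul_rpow (s := a + p - 1) (p := 1)
    (by linarith [(Nat.cast_nonneg p : (0 : ℝ) ≤ p)]) one_pos hr
  refine IntegrableOn.congr_fun (h.const_mul (r ^ a / Gamma a)) (fun x hx => ?_) measurableSet_Ioi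
  simp only [rpow_one, gammaPDFReal_mul_pow hx, neg_mul]

lemma integral_pow_gammaMeasure (ha : 0 < a) (hr : 0 < r) (p : ℕ) :
    ∫ x, x ^ p ∂gammaMeasure a r = Gamma (a + p) / (Gamma a * r ^ p) := by
  have hap : 0 < a + p := by positivity
  rw [integral_gammaMeasure ha hr, setIntegral_congr_fun measurableSet_Ioi
    fun x hx => gammaPDFReal_mul_pow hx p, integral_const_mul,
    integral_rpow_mul_exp_neg_mul_Ioi hap hr, div_rpow zero_le_one hr.le, one_rpow, rpow_add hr,
    rpow_natCast]
  have := (Gamma_pos_of_pos ha).ne'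
  have := (rpow_pos_of_pos hr a).ne'
  field_simp

lemma integrable_eval_gammaMeasure (ha : 0 < a) (hr : 0 < r) (g : ℝ[X]) :
    Integrable (fun x => g.eval x) (gammaMeasure a r) := by
  simp_rw [eval_eq_sum_range]
  exact integrable_finsetSum _ fun i _ => (integrable_pow_gammaMeasure ha hr i).const_mul _

lemma stein_identity_gammaMeasure (ha : 0 < a) (hr : 0 < r) (g : ℝ[X]) :
    ∫ x, (r * x - a) * g.eval x ∂gammaMeasure a r =
      ∫ x, x * g.derivative.eval x ∂gammaMeasure a r := by
  have hpow (p : ℕ) := integrable_pow_gammaMeasure ha hr p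
  have hL (q : ℝ[X]) : Integrable (fun x => (r * x - a) * q.eval x) (gammaMeasure a r) := by
    simpa only [eval_mul, eval_sub, eval_C, eval_X] using
      (integrable_eval_gammaMeasure ha hr ((C r * X - C a) * q) :)
  have hR (q : ℝ[X]) : Integrable (fun x => x * q.derivative.eval x) (gammaMeasure a r) := by
    simpa only [eval_mul, eval_X] using (integrable_eval_gammaMeasure ha hr (X * derivative q) :)
  induction g using Polynomial.induction_on' with
  | add p q hp hq =>
    simp only [eval_add, derivative_add, mul_add]
    rw [integral_add (hL p) (hL q), integral_add (hR p) (hR q), hp, hq]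
  | monomial p c =>
    have hx (x : ℝ) : x * (c * p * x ^ (p - 1)) = c * p * x ^ p := by
      cases p <;> simp [pow_succ]; ring
    have hx' (x : ℝ) : (r * x - a) * (c * x ^ p) = c * (r * x ^ (p + 1) - a * x ^ p) := by ring
    simp only [eval_monomial, derivative_monomial, hx, hx']
    rw [integral_const_mul, integral_const_mul, integral_sub ((hpow _).const_mul _)
      ((hpow _).const_mul _), integral_const_mul, integral_const_mul,
      integral_pow_gammaMeasure ha hr, integral_pow_gammaMeasure ha hr, Nat.cast_succ, ← add_assoc,
      Gamma_add_one (by positivity)]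
    have := (Gamma_pos_of_pos ha).ne'
    field_simp
    ring

lemma integrable_sub_pow_gammaMeasure (ha : 0 < a) (hr : 0 < r) (c : ℝ) (j : ℕ) :
    Integrable (fun x => (x - c) ^ j) (gammaMeasure a r) := by
  simpa only [eval_pow, eval_sub, eval_X, eval_C] using
    (integrable_eval_gammaMeasure ha hr ((X - C c) ^ j) :)

lemma integral_sub_mean_gammaMeasure (ha : 0 < a) (hr : 0 < r) :
    ∫ x, (x - a / r) ∂gammaMeasure a r = 0 := by
  have h := stein_identity_gammaMeasure ha hr 1
  simp only [eval_one, mul_one, derivative_one, eval_zero, mul_zero, integral_zero] at h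
  have hx (x : ℝ) : x - a / r = r⁻¹ * (r * x - a) := by field_simp
  simp_rw [hx, integral_const_mul, h, mul_zero]

lemma integral_sub_mean_pow_add_two_gammaMeasure (ha : 0 < a) (hr : 0 < r) (j : ℕ) :
    ∫ x, (x - a / r) ^ (j + 2) ∂gammaMeasure a r =
      (j + 1) / r * (∫ x, (x - a / r) ^ (j + 1) ∂gammaMeasure a r +
        a / r * ∫ x, (x - a / r) ^ j ∂gammaMeasure a r) := by
  have hint := integrable_sub_pow_gammaMeasure ha hr (a / r)
  have h := stein_identity_gammaMeasure ha hr ((X - C (a / r)) ^ (j + 1))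
  have hL (x : ℝ) : (r * x - a) * (x - a / r) ^ (j + 1) = r * (x - a / r) ^ (j + 2) := by
    rw [show r * x - a = r * (x - a / r) by field_simp]; ring
  have hR (x : ℝ) : x * (((j + 1 : ℕ) : ℝ) * (x - a / r) ^ j) =
      (j + 1) * ((x - a / r) ^ (j + 1) + a / r * (x - a / r) ^ j) := by
    push_cast; ring
  simp only [derivative_X_sub_C_pow, eval_mul, eval_pow, eval_sub, eval_X, eval_C,
    Nat.add_sub_cancel, hL, hR, integral_const_mul] at h
  rw [integral_add (hint _) ((hint _).const_mul _), integral_const_mul] at h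
  rw [div_mul_eq_mul_div, eq_div_iff hr.ne', ← h, mul_comm]

end GammaMeasure

noncomputable def gammaMomentPoly (t : ℝ) : ℕ → ℝ[X]
  | 0 => 1
  | 1 => 0
  | j + 2 => C ((j + 1) * t) * X * (gammaMomentPoly t (j + 1) + C t * gammaMomentPoly t j)

lemma X_pow_dvd_gammaMomentPoly (t : ℝ) : ∀ j, X ^ ((j + 1) / 2) ∣ gammaMomentPoly t j
  | 0 => by simp
  | 1 => by simp [gammaMomentPoly]
  | j + 2 => by
    have h₁ : X ^ ((j + 1) / 2) ∣ gammaMomentPoly t (j + 1) :=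
      (pow_dvd_pow X (by omega)).trans (X_pow_dvd_gammaMomentPoly t (j + 1))
    rw [gammaMomentPoly, show (j + 2 + 1) / 2 = (j + 1) / 2 + 1 by omega, pow_succ']
    exact mul_dvd_mul (dvd_mul_left X _)
      (dvd_add h₁ (dvd_mul_of_dvd_right (X_pow_dvd_gammaMomentPoly t j) _))

lemma integral_sub_pow_gammaMeasure_eq_eval {t : ℝ} (ht : 0 < t) {n : ℕ} (hn : n ≠ 0) :
    ∀ j, ∫ x, (x - t) ^ j ∂gammaMeasure n (n / t) = (gammaMomentPoly t j).eval (n : ℝ)⁻¹ := by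
  have ha : (0 : ℝ) < n := Nat.cast_pos.mpr (Nat.pos_of_ne_zero hn)
  have hr : (0 : ℝ) < n / t := div_pos ha ht
  have hmean : (n : ℝ) / (n / t) = t := div_div_cancel₀ ha.ne'
  intro j
  induction j using Nat.twoStepInduction with
  | zero =>
    have := isProbabilityMeasure_gammaMeasure ha hr
    simp [gammaMomentPoly]
  | one => simpa [gammaMomentPoly, hmean] using integral_sub_mean_gammaMeasure ha hr
  | more j ih₀ ih₁ =>
    have h := integral_sub_mean_pow_add_two_gammaMeasure ha hr j
    rw [hmean] at h
    rw [h, ih₀, ih₁, gammaMomentPoly]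
    simp only [eval_mul, eval_add, eval_C, eval_X]
    field_simp

lemma tendsto_pow_mul_eval_inv {Q : ℝ[X]} {a : ℕ} (h : X ^ a ∣ Q) :
    Tendsto (fun n : ℕ => (n : ℝ) ^ a * Q.eval (n : ℝ)⁻¹) atTop (𝓝 (Q.coeff a)) := by
  obtain ⟨S, rfl⟩ := h
  rw [coeff_X_pow_mul', if_pos le_rfl, Nat.sub_self, coeff_zero_eq_eval_zero]
  refine ((S.continuous.tendsto 0).comp (tendsto_inv_atTop_nhds_zero_nat (𝕜 := ℝ))).congr'
    ((eventually_ne_atTop 0).mono fun n hn => ?_)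
  simp [← mul_assoc, mul_inv_cancel₀ (pow_ne_zero a (Nat.cast_ne_zero.mpr hn : (n : ℝ) ≠ 0))]

lemma tendsto_pow_mul_eval_inv_sub_sum_coeff (Q : ℝ[X]) (k : ℕ) :
    Tendsto (fun n : ℕ => (n : ℝ) ^ (k + 1) *
      (Q.eval (n : ℝ)⁻¹ - Q.coeff 0 - ∑ m ∈ Finset.Icc 1 k, Q.coeff m * (n : ℝ) ^ (-(m : ℤ))))
      atTop (𝓝 (Q.coeff (k + 1))) := by
  set T := Q - ∑ i ∈ Finset.range (k + 1), monomial i (Q.coeff i) with hT_def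
  have hT : X ^ (k + 1) ∣ T := X_pow_dvd_iff.mpr fun d hd => by
    simp [T, coeff_monomial, hd]
  have hcoeff : T.coeff (k + 1) = Q.coeff (k + 1) := by
    simp [T, coeff_monomial]
  rw [← hcoeff]
  refine (tendsto_pow_mul_eval_inv hT).congr fun n => ?_
  rw [hT_def, Finset.range_eq_Ico, Finset.sum_eq_sum_Ico_succ_bot (Nat.succ_pos k), zero_add,
    Nat.succ_eq_add_one, Finset.Ico_add_one_right_eq_Icc]
  simp [eval_finsetSum, sub_sub, zpow_neg]

lemma tendsto_pow_mul_integral_sub_pow_gammaMeasure {t : ℝ} (ht : 0 < t) {a j : ℕ}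
    (ha : a ≤ (j + 1) / 2) :
    Tendsto (fun n : ℕ => (n : ℝ) ^ a * ∫ x, (x - t) ^ j ∂gammaMeasure n (n / t)) atTop
      (𝓝 ((gammaMomentPoly t j).coeff a)) :=
  (tendsto_pow_mul_eval_inv ((pow_dvd_pow X ha).trans (X_pow_dvd_gammaMomentPoly t j))).congr'
    ((eventually_ne_atTop 0).mono fun n hn => by
      dsimp only; rw [integral_sub_pow_gammaMeasure_eq_eval ht hn])

lemma taylorWithinEval_eq_univ {f : ℝ → ℝ} {n : ℕ} (hf : ContDiff ℝ n f) {s : Set ℝ}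
    (hs : UniqueDiffOn ℝ s) {t : ℝ} (ht : t ∈ s) (x : ℝ) :
    taylorWithinEval f n s t x = taylorWithinEval f n univ t x := by
  simp only [taylor_within_apply, iteratedDerivWithin_univ]
  refine Finset.sum_congr rfl fun j hj => ?_
  rw [iteratedDerivWithin_eq_iteratedDeriv hs
    (hf.contDiffAt.of_le (by exact_mod_cast Finset.mem_range_succ_iff.mp hj)) ht]

lemma abs_sub_taylorWithinEval_le {f : ℝ → ℝ} {n : ℕ} (hf : ContDiff ℝ (n + 1) f) {t x C : ℝ}
    (hC : ∀ y, |y - t| ≤ |x - t| →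
      |iteratedDeriv (n + 1) f y - iteratedDeriv (n + 1) f t| ≤ C) :
    |f x - taylorWithinEval f (n + 1) univ t x| ≤ C * |x - t| ^ (n + 1) / (n + 1)! := by
  rcases eq_or_ne t x with rfl | hx
  · simp
  obtain ⟨η, hη, h⟩ := taylor_mean_remainder_lagrange_iteratedDeriv hx hf.contDiffOn
  rw [taylorWithinEval_eq_univ (hf.of_le (by norm_cast; omega)) (uniqueDiffOn_uIcc hx)
    left_mem_uIcc] at h
  have hr : f x - taylorWithinEval f (n + 1) univ t x =
      (iteratedDeriv (n + 1) f η - iteratedDeriv (n + 1) f t) * (x - t) ^ (n + 1) / (n + 1)! := by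
    rw [taylorWithinEval_succ, iteratedDerivWithin_univ, smul_eq_mul, ← sub_sub, h,
      Nat.factorial_succ]
    push_cast
    ring
  rw [hr, abs_div, abs_mul, abs_pow, Nat.abs_cast]
  gcongr
  exact hC η (abs_sub_left_of_mem_uIcc (uIoo_subset_uIcc_self hη))

lemma exists_abs_sub_taylorWithinEval_le {f : ℝ → ℝ} {n : ℕ} (hf : ContDiff ℝ (n + 1) f) {M : ℝ}
    (hM : ∀ x, |iteratedDeriv (n + 1) f x| ≤ M) (t : ℝ) {ε : ℝ} (hε : 0 < ε) :
    ∃ K, ∀ x, |f x - taylorWithinEval f (n + 1) univ t x| ≤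
      ε * |x - t| ^ (n + 1) + K * |x - t| ^ (n + 3) := by
  obtain ⟨δ, hδ, hD⟩ := Metric.continuousAt_iff.mp
    (hf.continuous_iteratedDeriv (n + 1) le_rfl).continuousAt ε hε
  have hM₀ : 0 ≤ M := (abs_nonneg _).trans (hM t)
  have hfact : (1 : ℝ) ≤ (n + 1)! := by exact_mod_cast (n + 1).factorial_pos
  refine ⟨2 * M / δ ^ 2, fun x => ?_⟩
  rcases lt_or_ge |x - t| δ with hnear | hfar
  · have h := abs_sub_taylorWithinEval_le hf (C := ε) (x := x) fun y hy =>
      (hD (by rw [Real.dist_eq]; exact hy.trans_lt hnear)).le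
    have : ε * |x - t| ^ (n + 1) / (n + 1)! ≤ ε * |x - t| ^ (n + 1) :=
      div_le_self (by positivity) hfact
    nlinarith [show 0 ≤ 2 * M / δ ^ 2 * |x - t| ^ (n + 3) by positivity]
  · have h := abs_sub_taylorWithinEval_le hf (C := 2 * M) (x := x) fun y _ =>
      (abs_sub _ _).trans (by linarith [hM y, hM t])
    have h₁ : 2 * M * |x - t| ^ (n + 1) / (n + 1)! ≤ 2 * M * |x - t| ^ (n + 1) :=
      div_le_self (by positivity) hfact
    have h₂ : 2 * M * |x - t| ^ (n + 1) ≤ 2 * M / δ ^ 2 * |x - t| ^ (n + 3) := by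
      rw [div_mul_eq_mul_div, le_div_iff₀ (by positivity), pow_add _ (n + 1) 2, ← mul_assoc]
      gcongr
    nlinarith [show 0 ≤ ε * |x - t| ^ (n + 1) by positivity]

lemma integrable_sub_taylorWithinEval {μ : Measure ℝ} {f : ℝ → ℝ} {n : ℕ} {t M : ℝ}
    (hμ : ∀ j, Integrable (fun x => (x - t) ^ j) μ) (hf : ContDiff ℝ (n + 1) f)
    (hM : ∀ x, |iteratedDeriv (n + 1) f x| ≤ M) :
    Integrable (fun x => f x - taylorWithinEval f (n + 1) univ t x) μ := by
  obtain ⟨K, hK⟩ := exists_abs_sub_taylorWithinEval_le hf hM t one_pos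
  refine Integrable.mono' (((hμ (n + 1)).abs.const_mul 1).add ((hμ (n + 3)).abs.const_mul K))
    ?_ (ae_of_all _ fun x => by simpa [abs_pow] using hK x)
  simp_rw [taylor_within_apply]
  exact (hf.continuous.sub (by fun_prop)).aestronglyMeasurable

noncomputable def randomisedTaylorPoly (f : ℝ → ℝ) (t : ℝ) (m : ℕ) : ℝ[X] :=
  ∑ j ∈ Finset.range (m + 1), C (iteratedDeriv j f t / j !) * gammaMomentPoly t j

lemma coeff_zero_randomisedTaylorPoly (f : ℝ → ℝ) (t : ℝ) (m : ℕ) :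
    (randomisedTaylorPoly f t m).coeff 0 = f t := by
  have h (j : ℕ) : (gammaMomentPoly t (j + 1)).coeff 0 = 0 :=
    X_pow_dvd_iff.mp ((pow_dvd_pow X (by omega)).trans (X_pow_dvd_gammaMomentPoly t (j + 1))) 0
      one_pos
  simp [randomisedTaylorPoly, finsetSum_coeff, Finset.sum_range_succ', h, gammaMomentPoly]

lemma integral_taylorWithinEval_gammaMeasure {t : ℝ} (ht : 0 < t) {n : ℕ} (hn : n ≠ 0)
    (f : ℝ → ℝ) (m : ℕ) :
    ∫ x, taylorWithinEval f m univ t x ∂gammaMeasure n (n / t) =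
      (randomisedTaylorPoly f t m).eval (n : ℝ)⁻¹ := by
  have ha : (0 : ℝ) < n := Nat.cast_pos.mpr (Nat.pos_of_ne_zero hn)
  simp_rw [taylor_within_apply, iteratedDerivWithin_univ, smul_eq_mul]
  rw [integral_finsetSum _ fun j _ =>
    ((integrable_sub_pow_gammaMeasure ha (div_pos ha ht) t j).const_mul _).mul_const _]
  simp only [integral_mul_const, integral_const_mul, integral_sub_pow_gammaMeasure_eq_eval ht hn,
    randomisedTaylorPoly, eval_finsetSum, eval_mul, eval_C]
  exact Finset.sum_congr rfl fun j _ => by ring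

lemma integral_gammaMeasure_eq_eval_randomisedTaylorPoly_add {t : ℝ} (ht : 0 < t) {n : ℕ}
    (hn : n ≠ 0) {f : ℝ → ℝ} {m : ℕ} {M : ℝ} (hf : ContDiff ℝ (m + 1) f)
    (hM : ∀ x, |iteratedDeriv (m + 1) f x| ≤ M) :
    ∫ x, f x ∂gammaMeasure n (n / t) = (randomisedTaylorPoly f t (m + 1)).eval (n : ℝ)⁻¹ +
      ∫ x, f x - taylorWithinEval f (m + 1) univ t x ∂gammaMeasure n (n / t) := by
  have ha : (0 : ℝ) < n := Nat.cast_pos.mpr (Nat.pos_of_ne_zero hn)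
  have hμ := integrable_sub_pow_gammaMeasure ha (div_pos ha ht) t
  have hT : Integrable (fun x => taylorWithinEval f (m + 1) univ t x) (gammaMeasure n (n / t)) := by
    simp_rw [taylor_within_apply, iteratedDerivWithin_univ, smul_eq_mul]
    exact integrable_finsetSum _ fun j _ => ((hμ j).const_mul _).mul_const _
  rw [← integral_taylorWithinEval_gammaMeasure ht hn, ← integral_add hT
    (integrable_sub_taylorWithinEval hμ hf hM)]
  simp

lemma tendsto_zero_of_forall_abs_le_mul_add_mul {ι : Type*} {l : Filter ι} {u v w : ι → ℝ} {A : ℝ}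
    (hv : Tendsto v l (𝓝 A)) (hw : Tendsto w l (𝓝 0))
    (h : ∀ ε > 0, ∃ K, ∀ᶠ i in l, |u i| ≤ ε * v i + K * w i) : Tendsto u l (𝓝 0) := by
  rw [Metric.tendsto_nhds]
  intro δ hδ
  obtain ⟨K, hK⟩ := h (δ / (2 * (|A| + 1))) (by positivity)
  have hv' : ∀ᶠ i in l, v i < |A| + 1 := hv.eventually (gt_mem_nhds (by linarith [le_abs_self A]))
  have hw' : ∀ᶠ i in l, K * w i < δ / 2 :=
    (hw.const_mul K).eventually (gt_mem_nhds (by simpa using half_pos hδ))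
  filter_upwards [hK, hv', hw'] with i hKi hvi hwi
  rw [Real.dist_eq, sub_zero]
  calc |u i| ≤ δ / (2 * (|A| + 1)) * v i + K * w i := hKi
    _ < δ / (2 * (|A| + 1)) * (|A| + 1) + δ / 2 := by gcongr
    _ = δ := by field_simp; ring

lemma tendsto_pow_mul_integral_sub_taylorWithinEval_gammaMeasure {f : ℝ → ℝ} {k : ℕ} {t M : ℝ}
    (ht : 0 < t) (hf : ContDiff ℝ (2 * k + 2 : ℕ) f)
    (hM : ∀ x, |iteratedDeriv (2 * k + 2) f x| ≤ M) :
    Tendsto (fun n : ℕ => (n : ℝ) ^ (k + 1) *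
      ∫ x, f x - taylorWithinEval f (2 * k + 2) univ t x ∂gammaMeasure n (n / t)) atTop (𝓝 0) := by
  have hv := tendsto_pow_mul_integral_sub_pow_gammaMeasure ht (a := k + 1) (j := 2 * k + 2)
    (by omega)
  have hw := tendsto_pow_mul_integral_sub_pow_gammaMeasure ht (a := k + 1) (j := 2 * k + 4)
    (by omega)
  rw [X_pow_dvd_iff.mp (X_pow_dvd_gammaMomentPoly t _) (k + 1) (by omega)] at hw
  refine tendsto_zero_of_forall_abs_le_mul_add_mul hv hw fun ε hε => ?_
  obtain ⟨K, hK⟩ := exists_abs_sub_taylorWithinEval_le (n := 2 * k + 1) hf hM t hε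
  refine ⟨K, (eventually_ne_atTop 0).mono fun n hn => ?_⟩
  have ha : (0 : ℝ) < n := Nat.cast_pos.mpr (Nat.pos_of_ne_zero hn)
  have hμ := integrable_sub_pow_gammaMeasure ha (div_pos ha ht) t
  have hbound : ∀ x, ‖f x - taylorWithinEval f (2 * k + 2) univ t x‖ ≤
      ε * (x - t) ^ (2 * k + 2) + K * (x - t) ^ (2 * k + 4) := fun x => by
    have e₁ : |x - t| ^ (2 * k + 2) = (x - t) ^ (2 * k + 2) :=
      Even.pow_abs ⟨k + 1, by ring⟩ _
    have e₂ : |x - t| ^ (2 * k + 4) = (x - t) ^ (2 * k + 4) :=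
      Even.pow_abs ⟨k + 2, by ring⟩ _
    rw [Real.norm_eq_abs, ← e₁, ← e₂]
    exact hK x
  have hint := norm_integral_le_of_norm_le (((hμ _).const_mul ε).add ((hμ _).const_mul K))
    (ae_of_all _ hbound)
  simp only [Pi.add_apply] at hint
  rw [integral_add ((hμ _).const_mul ε) ((hμ _).const_mul K), integral_const_mul,
    integral_const_mul, Real.norm_eq_abs] at hint
  rw [abs_mul, abs_of_nonneg (by positivity)]
  calc _ ≤ (n : ℝ) ^ (k + 1) * (ε * ∫ x, (x - t) ^ (2 * k + 2) ∂gammaMeasure n (n / t) +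
        K * ∫ x, (x - t) ^ (2 * k + 4) ∂gammaMeasure n (n / t)) := by gcongr
    _ = _ := by ring

/-- Expansion of the randomisation error: for `t > 0` and `f` of class `C^{2k+2}` with
bounded `(2k+2)`-th derivative, there exist `b_1, …, b_{k+1}` such that
`n^{k+1} (∫ f dΓ(n,n/t) - f(t) - ∑_{m=1}^{k} b_m n^{-m}) → b_{k+1}` as `n → ∞`. -/
theorem gamma_randomisation_expansion (k : ℕ) (t : ℝ) (ht : 0 < t) (f : ℝ → ℝ)
    (hf : ContDiff ℝ (2 * k + 2) f)
    (hf_bdd : ∃ M : ℝ, ∀ x : ℝ, |iteratedDeriv (2 * k + 2) f x| ≤ M) :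
    ∃ b : ℕ → ℝ,
      Tendsto (fun n : ℕ =>
          (n : ℝ) ^ (k + 1) *
            ((∫ x, f x ∂(gammaMeasure n ((n : ℝ) / t))) - f t -
              ∑ m ∈ Finset.Icc 1 k, b m * (n : ℝ) ^ (-(m : ℤ))))
        atTop (nhds (b (k + 1))) := by
  obtain ⟨M, hM⟩ := hf_bdd
  have hf' : ContDiff ℝ (2 * k + 2 : ℕ) f := by exact_mod_cast hf
  refine ⟨(randomisedTaylorPoly f t (2 * k + 2)).coeff, ?_⟩
  have h := (tendsto_pow_mul_eval_inv_sub_sum_coeff (randomisedTaylorPoly f t (2 * k + 2)) k).add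
    (tendsto_pow_mul_integral_sub_taylorWithinEval_gammaMeasure ht hf' hM)
  rw [add_zero] at h
  refine h.congr' ((eventually_ne_atTop 0).mono fun n hn => ?_)
  dsimp only
  rw [integral_gammaMeasure_eq_eval_randomisedTaylorPoly_add ht hn hf' hM,
    coeff_zero_randomisedTaylorPoly]
  ring
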